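/- arXiv:0812.4895 — 6 statements merged into one kernel-verified Lean document; each statement's English description precedes it below -/
import Mathlib

section
/- Let V be a real vector space equipped with a symmetric bilinear form B, and let A₁, A₂ : V → V be linear maps that are skew-adjoint with respect to B (i.e., B(Aᵢ x, y) = −B(x, Aᵢ y) for all x, y ∈ V and i = 1, 2). Suppose ψ : ℕ → V is a Magri hierarchy, i.e., A₁(ψₙ) = A₂(ψₙ₊₁) for all n. Then for every w ∈ V with A₂(w) = 0 and every i, one has B(ψᵢ, A₁ w) = 0. (This is the algebraic core of Kupershmidt's theorem: each Hamiltonian density Hᵢ of the original bi-Hamiltonian system, with generating function ψᵢ = δHᵢ/δu, remains a conserved density for the Kupershmidt deformation u_t = f − A₁(w), A₂(w) = 0.) -/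
/-- Algebraic core of Kupershmidt's theorem: if `ψ` is a Magri hierarchy for the
pair of skew-adjoint (w.r.t. a symmetric bilinear form `B`) operators `A₁, A₂`,
and `A₂ w = 0`, then `B (ψ i) (A₁ w) = 0` for every `i`. -/
theorem kupershmidt_conserved_densities
    (V : Type*) [AddCommGroup V] [Module ℝ V]
    (B : V →ₗ[ℝ] V →ₗ[ℝ] ℝ)
    (hB : ∀ x y : V, B x y = B y x)
    (A₁ A₂ : V →ₗ[ℝ] V)
    (hA₁ : ∀ x y : V, B (A₁ x) y = - B x (A₁ y))
    (hA₂ : ∀ x y : V, B (A₂ x) y = - B x (A₂ y))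
    (ψ : ℕ → V)
    (hMagri : ∀ n : ℕ, A₁ (ψ n) = A₂ (ψ (n + 1)))
    (w : V) (hw : A₂ w = 0) :
    ∀ i : ℕ, B (ψ i) (A₁ w) = 0 := by
  intro i
  have h : B (ψ i) (A₁ w) = - B (A₁ (ψ i)) w := by
    rw [hA₁]; ring
  rw [h, hMagri, hA₂, hw, map_zero]
  simp
end

section
/- Let V be a real vector space equipped with a symmetric bilinear form B, and let A₁, A₂ : V → V be linear maps that are skew-adjoint with respect to B. Suppose ψ : ℕ → V is a Magri hierarchy, i.e., A₁(ψₙ) = A₂(ψₙ₊₁) for all n. Then for all indices i, j ∈ ℕ one has B(ψᵢ, A₁ ψⱼ) = 0 and B(ψᵢ, A₂ ψⱼ) = 0. (This is the standard Lenard–Magri commutation: the Poisson brackets {ψᵢ, ψⱼ}_{A₁} and {ψᵢ, ψⱼ}_{A₂} all vanish, so the hierarchy of conserved quantities is in involution with respect to both Hamiltonian structures.) -/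
/-- Lenard–Magri commutation: the members of a Magri hierarchy for a pair of
skew-adjoint (w.r.t. a symmetric bilinear form `B`) operators `A₁, A₂` are in
involution with respect to both brackets. -/
theorem magri_hierarchy_in_involution
    (V : Type*) [AddCommGroup V] [Module ℝ V]
    (B : V →ₗ[ℝ] V →ₗ[ℝ] ℝ)
    (hB : ∀ x y : V, B x y = B y x)
    (A₁ A₂ : V →ₗ[ℝ] V)
    (hA₁ : ∀ x y : V, B (A₁ x) y = - B x (A₁ y))
    (hA₂ : ∀ x y : V, B (A₂ x) y = - B x (A₂ y))
    (ψ : ℕ → V)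
    (hMagri : ∀ n : ℕ, A₁ (ψ n) = A₂ (ψ (n + 1))) :
    ∀ i j : ℕ, B (ψ i) (A₁ (ψ j)) = 0 ∧ B (ψ i) (A₂ (ψ j)) = 0 := by
  set g : ℕ → ℕ → ℝ := fun i j => B (ψ i) (A₂ (ψ j)) with hg
  have ganti : ∀ i j, g i j = - g j i := by
    intro i j
    simp only [hg]
    rw [hB, hA₂]
  have gshift : ∀ i j, g i (j + 1) = g (i + 1) j := by
    intro i j
    simp only [hg]
    rw [← hMagri j, show (B (ψ i)) (A₁ (ψ j)) = -(B (A₁ (ψ i))) (ψ j) from by rw [hA₁, neg_neg],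
      hMagri i, hA₂, neg_neg]
  have gconst : ∀ i j, g i j = g 0 (i + j) := by
    intro i
    induction i with
    | zero => simp
    | succ n ih =>
      intro j
      rw [← gshift, ih]
      congr 1
      omega
  have gzero : ∀ i j, g i j = 0 := by
    intro i j
    have h1 : g i j = g j i := by
      rw [gconst i j, gconst j i, Nat.add_comm]
    have h2 := ganti i j
    linarith [h1, h2]
  intro i j
  refine ⟨?_, gzero i j⟩
  have : B (ψ i) (A₁ (ψ j)) = g i (j + 1) := by
    simp only [hg]
    rw [hMagri j]
  rw [this, gzero]
end

section
/- Let V be a real vector space and let A₁, A₂, L : V → V be linear maps. Define block linear maps Ã₁, Ã₂ : V × V → V × V by Ã₁(x, y) = (A₁x − A₁y, L y) and Ã₂(x, y) = (A₂x − A₂y, −L x). Suppose ψ : ℕ → V is a Magri hierarchy, i.e., A₁(ψₙ) = A₂(ψₙ₊₁) for all n, and set Ψₙ = (ψₙ, −ψₙ₊₁) ∈ V × V. Then Ã₁(Ψₙ) = Ã₂(Ψₙ₊₁) for all n, i.e., the shifted pairs (ψₙ, −ψₙ₊₁) form a Magri hierarchy for the pair (Ã₁, Ã₂). (This is the algebraic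 core of the theorem that a Magri hierarchy of a bi-Hamiltonian system induces a Magri hierarchy for its Kupershmidt deformation, with the block bivectors Ã₁ = (A₁, −A₁; 0, ℓ) and Ã₂ = (A₂, −A₂; −ℓ, 0).) -/
/-- A Magri hierarchy `ψ` of a bi-Hamiltonian system induces a Magri hierarchy
`Ψ n = (ψ n, -ψ (n+1))` for the block operators
`Ã₁(x, y) = (A₁ x − A₁ y, L y)` and `Ã₂(x, y) = (A₂ x − A₂ y, −L x)`
of its Kupershmidt deformation. -/
theorem kupershmidt_deformation_magri_hierarchy
    (V : Type*) [AddCommGroup V] [Module ℝ V]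
    (A₁ A₂ L : V →ₗ[ℝ] V)
    (ψ : ℕ → V)
    (hMagri : ∀ n : ℕ, A₁ (ψ n) = A₂ (ψ (n + 1)))
    (Atilde₁ Atilde₂ : V × V → V × V)
    (hAtilde₁ : ∀ p : V × V, Atilde₁ p = (A₁ p.1 - A₁ p.2, L p.2))
    (hAtilde₂ : ∀ p : V × V, Atilde₂ p = (A₂ p.1 - A₂ p.2, -(L p.1)))
    (Ψ : ℕ → V × V)
    (hΨ : ∀ n : ℕ, Ψ n = (ψ n, -(ψ (n + 1)))) :
    ∀ n : ℕ, Atilde₁ (Ψ n) = Atilde₂ (Ψ (n + 1)) := by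
  intro n
  simp only [hAtilde₁, hAtilde₂, hΨ, map_neg, sub_neg_eq_add, hMagri, neg_neg]
end

section
/- Let u, v, w : ℝ² → ℝ be smooth functions of (x, t). Set G_u = −3u, G_v = 0, G_w = −1/2 (the variational derivatives of the density −3u²/2 − w/2 with respect to u, v, w). Then the matrix differential operator (0, −2u, −D_t − 2v; 2u, D_t, −12u² − 2w; −D_t + 2v, 12u² + 2w, 8uD_t + 4u_t) applied to the column (G_u, G_v, G_w) equals the column (v, w, ∂_t u − 6uv). Consequently, (u, v, w) satisfies the first-order KdV system u_x = v, v_x = w, w_x = u_t − 6uv if and only if (∂_x u, ∂_x v, ∂_x w) equals this matrix operator applied to (G_u, G_v, G_w). (This is the second Hamiltonian form of the KdV equation rewritten as a non-evolution system with x as the evolution variable.) -/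
/-- Partial derivative in the first variable (x) of a function of `(x, t)`. -/
noncomputable def pdx (f : ℝ × ℝ → ℝ) : ℝ × ℝ → ℝ :=
  fun p => fderiv ℝ f p (1, 0)

/-- Partial derivative in the second variable (t) of a function of `(x, t)`. -/
noncomputable def pdt (f : ℝ × ℝ → ℝ) : ℝ × ℝ → ℝ :=
  fun p => fderiv ℝ f p (0, 1)

/-!
Since `G_v` and `G_w` are constant, `D_t` annihilates them, and `D_t G_u = -3 u_t`. Each row of
the operator applied to `(G_u, G_v, G_w)` is then a polynomial identity in `u, v, w, u_t`, and
the equivalence follows by rewriting the right-hand sides with these identities.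
-/

lemma pdt_const (c : ℝ) (p : ℝ × ℝ) : pdt (fun _ => c) p = 0 := by
  simp [pdt]

lemma pdt_neg_const_mul {f : ℝ × ℝ → ℝ} {p : ℝ × ℝ} (c : ℝ) (hf : DifferentiableAt ℝ f p) :
    pdt (fun q => -(c * f q)) p = -(c * pdt f p) := by
  simp [pdt, fderiv_fun_neg, fderiv_const_mul hf]

lemma kdv_second_operator_apply_variationalDerivative
    {u : ℝ × ℝ → ℝ} (v w : ℝ × ℝ → ℝ) (hu : Differentiable ℝ u)
    {Gu Gv Gw : ℝ × ℝ → ℝ}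
    (hGu : Gu = fun p => -(3 * u p)) (hGv : Gv = fun _ => 0) (hGw : Gw = fun _ => -(1 / 2))
    (p : ℝ × ℝ) :
    (0 * Gu p + (-(2 * u p)) * Gv p + (-(pdt Gw p) - 2 * v p * Gw p) = v p)
      ∧ (2 * u p * Gu p + pdt Gv p + (-(12 * u p ^ 2) - 2 * w p) * Gw p = w p)
      ∧ ((-(pdt Gu p) + 2 * v p * Gu p) + (12 * u p ^ 2 + 2 * w p) * Gv p
          + (8 * u p * pdt Gw p + 4 * pdt u p * Gw p) = pdt u p - 6 * u p * v p) := by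
  subst hGu hGv hGw
  rw [pdt_neg_const_mul 3 (hu p), pdt_const, pdt_const]
  exact ⟨by ring, by ring, by ring⟩

theorem kdv_second_hamiltonian_form_x_evolution_general
    (u v w : ℝ × ℝ → ℝ)
    (hu : ContDiff ℝ (⊤ : ℕ∞) u)
    (Gu Gv Gw : ℝ × ℝ → ℝ)
    (hGu : Gu = fun p => -(3 * u p))
    (hGv : Gv = fun _ => 0)
    (hGw : Gw = fun _ => -(1 / 2)) :
    (∀ p : ℝ × ℝ,
        (0 * Gu p + (-(2 * u p)) * Gv p + (-(pdt Gw p) - 2 * v p * Gw p) = v p)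
      ∧ (2 * u p * Gu p + pdt Gv p + (-(12 * u p ^ 2) - 2 * w p) * Gw p = w p)
      ∧ ((-(pdt Gu p) + 2 * v p * Gu p) + (12 * u p ^ 2 + 2 * w p) * Gv p
          + (8 * u p * pdt Gw p + 4 * pdt u p * Gw p) = pdt u p - 6 * u p * v p))
    ∧ ((∀ p : ℝ × ℝ,
          pdx u p = v p ∧ pdx v p = w p ∧ pdx w p = pdt u p - 6 * u p * v p)
      ↔ (∀ p : ℝ × ℝ,
          pdx u p = 0 * Gu p + (-(2 * u p)) * Gv p + (-(pdt Gw p) - 2 * v p * Gw p)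
        ∧ pdx v p = 2 * u p * Gu p + pdt Gv p + (-(12 * u p ^ 2) - 2 * w p) * Gw p
        ∧ pdx w p = (-(pdt Gu p) + 2 * v p * Gu p) + (12 * u p ^ 2 + 2 * w p) * Gv p
            + (8 * u p * pdt Gw p + 4 * pdt u p * Gw p))) := by
  have hop := kdv_second_operator_apply_variationalDerivative v w
    (hu.differentiable (by simp)) hGu hGv hGw
  refine ⟨hop, forall_congr' fun p => ?_⟩
  obtain ⟨row_u, row_v, row_w⟩ := hop p
  rw [row_u, row_v, row_w]

/-- The second Hamiltonian form of the KdV equation written as the non-evolution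
first-order system `u_x = v, v_x = w, w_x = u_t − 6uv`: the matrix operator
`(0, −2u, −D_t − 2v; 2u, D_t, −12u² − 2w; −D_t + 2v, 12u² + 2w, 8u D_t + 4u_t)`
applied to the variational derivatives `(G_u, G_v, G_w) = (−3u, 0, −1/2)` of
the density `−3u²/2 − w/2` yields the column `(v, w, u_t − 6uv)`, and the
system is equivalent to `(u_x, v_x, w_x)` being equal to this column. -/
theorem kdv_second_hamiltonian_form_x_evolution
    (u v w : ℝ × ℝ → ℝ)
    (hu : ContDiff ℝ (⊤ : ℕ∞) u) (hv : ContDiff ℝ (⊤ : ℕ∞) v)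
    (hw : ContDiff ℝ (⊤ : ℕ∞) w)
    (Gu Gv Gw : ℝ × ℝ → ℝ)
    (hGu : Gu = fun p => -(3 * u p))
    (hGv : Gv = fun _ => 0)
    (hGw : Gw = fun _ => -(1 / 2)) :
    (∀ p : ℝ × ℝ,
        (0 * Gu p + (-(2 * u p)) * Gv p + (-(pdt Gw p) - 2 * v p * Gw p) = v p)
      ∧ (2 * u p * Gu p + pdt Gv p + (-(12 * u p ^ 2) - 2 * w p) * Gw p = w p)
      ∧ ((-(pdt Gu p) + 2 * v p * Gu p) + (12 * u p ^ 2 + 2 * w p) * Gv p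
          + (8 * u p * pdt Gw p + 4 * pdt u p * Gw p) = pdt u p - 6 * u p * v p))
    ∧ ((∀ p : ℝ × ℝ,
          pdx u p = v p ∧ pdx v p = w p ∧ pdx w p = pdt u p - 6 * u p * v p)
      ↔ (∀ p : ℝ × ℝ,
          pdx u p = 0 * Gu p + (-(2 * u p)) * Gv p + (-(pdt Gw p) - 2 * v p * Gw p)
        ∧ pdx v p = 2 * u p * Gu p + pdt Gv p + (-(12 * u p ^ 2) - 2 * w p) * Gw p
        ∧ pdx w p = (-(pdt Gu p) + 2 * v p * Gu p) + (12 * u p ^ 2 + 2 * w p) * Gv p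
            + (8 * u p * pdt Gw p + 4 * pdt u p * Gw p))) :=
  kdv_second_hamiltonian_form_x_evolution_general u v w hu Gu Gv Gw hGu hGv hGw
end

section
/- Let u, φ : ℝ → ℝ be smooth functions satisfying φ − φ″ = (3u² − (u′)²)/2 − u u″, and set m = u − u″. Then φ‴ − φ′ = −u m′ − 2u′ m. (That is, applying the second Hamiltonian operator B₂ = D_x³ − D_x of the Camassa–Holm equation to the variational derivative φ = δH₂/δm, characterized by (1 − D_x²)φ = δH₂/δu, yields the Camassa–Holm right-hand side −u m_x − 2u_x m; this avoids any use of the inverse operator (1 − D_x²)⁻¹.) -/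
/-! Differentiating the relation `φ - φ'' = (3u² - u'²)/2 - u u''` turns its left side into
`-(φ''' - φ')` and its right side into `3uu' - 2u'u'' - u u'''`, which is `u m' + 2u'm` for
`m = u - u''`. -/

open scoped ContDiff

variable {𝕜 : Type*} [NontriviallyNormedField 𝕜]

theorem ContDiff.differentiable_iterate_deriv {F : Type*} [NormedAddCommGroup F]
    [NormedSpace 𝕜 F] {f : 𝕜 → F} (hf : ContDiff 𝕜 ∞ f) (n : ℕ) :
    Differentiable 𝕜 (deriv^[n] f) :=
  (hf.iterate_deriv n).differentiable (by simp)

theorem hasDerivAt_sub_deriv_deriv {F : Type*} [NormedAddCommGroup F] [NormedSpace 𝕜 F]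
    {f : 𝕜 → F} {x : 𝕜} (hf : DifferentiableAt 𝕜 f x)
    (hf₂ : DifferentiableAt 𝕜 (deriv (deriv f)) x) :
    HasDerivAt (fun y => f y - deriv (deriv f) y) (deriv f x - deriv (deriv (deriv f)) x) x :=
  hf.hasDerivAt.fun_sub hf₂.hasDerivAt

theorem hasDerivAt_camassaHolm_gradient [CharZero 𝕜] {u : 𝕜 → 𝕜} {x : 𝕜}
    (hu : DifferentiableAt 𝕜 u x) (hu₁ : DifferentiableAt 𝕜 (deriv u) x)
    (hu₂ : DifferentiableAt 𝕜 (deriv (deriv u)) x) :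
    HasDerivAt (fun y => (3 * u y ^ 2 - deriv u y ^ 2) / 2 - u y * deriv (deriv u) y)
      (3 * u x * deriv u x - 2 * deriv u x * deriv (deriv u) x
        - u x * deriv (deriv (deriv u)) x) x := by
  refine (((((hu.hasDerivAt.fun_pow 2).const_mul 3).fun_sub
    (hu₁.hasDerivAt.fun_pow 2)).div_const 2).fun_sub
    (hu.hasDerivAt.fun_mul hu₂.hasDerivAt)).congr_deriv ?_
  norm_num
  ring

/-- Applying the second Hamiltonian operator `B₂ = D_x³ − D_x` of the
Camassa–Holm equation to the variational derivative `φ = δH₂/δm`, characterized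
by `(1 − D_x²)φ = (3u² − u_x²)/2 − u u_xx`, yields the Camassa–Holm right-hand
side `−u m_x − 2 u_x m` with `m = u − u_xx`. -/
theorem camassa_holm_B2_on_variational_derivative
    (u φ : ℝ → ℝ)
    (hu : ContDiff ℝ (⊤ : ℕ∞) u) (hφ : ContDiff ℝ (⊤ : ℕ∞) φ)
    (hφeq : ∀ x : ℝ, φ x - deriv (deriv φ) x
      = (3 * u x ^ 2 - (deriv u x) ^ 2) / 2 - u x * deriv (deriv u) x)
    (m : ℝ → ℝ)
    (hm : m = fun x => u x - deriv (deriv u) x) :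
    ∀ x : ℝ, deriv (deriv (deriv φ)) x - deriv φ x
      = -(u x) * deriv m x - 2 * deriv u x * m x := by
  subst hm
  intro x
  have hφ' := hasDerivAt_sub_deriv_deriv (f := φ) (hφ.differentiable_iterate_deriv 0 x)
    (hφ.differentiable_iterate_deriv 2 x)
  rw [funext hφeq] at hφ'
  have hrel := hφ'.unique (hasDerivAt_camassaHolm_gradient (hu.differentiable_iterate_deriv 0 x)
    (hu.differentiable_iterate_deriv 1 x) (hu.differentiable_iterate_deriv 2 x))
  rw [(hasDerivAt_sub_deriv_deriv (f := u) (hu.differentiable_iterate_deriv 0 x)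
    (hu.differentiable_iterate_deriv 2 x)).deriv]
  linear_combination -hrel
end

section
/- Let u, w : ℝ² → ℝ be smooth functions of (x, t) satisfying the KdV6 system u_t = u_xxx + 6uu_x − w_x and w_xxx + 4u w_x + 2u_x w = 0. Then ∂_t(u²/2) = ∂_x( u u_xx − u_x²/2 + 2u³ + u w + w_xx/2 ). (That is, u²/2, the first Hamiltonian density of KdV, remains a conserved density for the KdV6 equation, the Kupershmidt deformation of KdV.) -/
/-!
Since `∂_t(u²/2) = u u_t`, it suffices to see that the x-derivative of the flux is
`u · (u_xxx + 6uu_x − w_x) + ½ · (w_xxx + 4u w_x + 2u_x w)`: the first summand is `u u_t` by the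
evolution equation and the second vanishes by the constraint `A₂(w) = 0`.
-/

open scoped ContDiff

theorem fderiv_apply_one_zero (f : ℝ × ℝ → ℝ) (p : ℝ × ℝ) :
    fderiv ℝ f p (1, 0) = pdx f p :=
  rfl

theorem ContDiff.pdx {f : ℝ × ℝ → ℝ} (hf : ContDiff ℝ ∞ f) : ContDiff ℝ ∞ (pdx f) :=
  (hf.fderiv_right le_rfl).clm_apply contDiff_const

theorem pdt_sq_div_two {u : ℝ × ℝ → ℝ} {p : ℝ × ℝ} (hu : DifferentiableAt ℝ u p) :
    pdt (fun q => u q ^ 2 / 2) p = u p * pdt u p := by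
  simp (disch := fun_prop) only [pdt, div_eq_mul_inv, fderiv_fun_mul, fderiv_fun_pow,
    fderiv_fun_const, nsmul_eq_mul, add_apply, smul_apply, Pi.zero_apply, zero_apply, smul_eq_mul]
  ring

theorem pdx_kdv6_flux {u w : ℝ × ℝ → ℝ} (hu : ContDiff ℝ ∞ u) (hw : ContDiff ℝ ∞ w)
    (p : ℝ × ℝ) :
    pdx (fun q => u q * pdx (pdx u) q - (pdx u q) ^ 2 / 2
        + 2 * (u q) ^ 3 + u q * w q + pdx (pdx w) q / 2) p
      = u p * (pdx (pdx (pdx u)) p + 6 * u p * pdx u p - pdx w p)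
        + (pdx (pdx (pdx w)) p + 4 * u p * pdx w p + 2 * pdx u p * w p) / 2 := by
  have du := hu.differentiable (by simp)
  have dw := hw.differentiable (by simp)
  have dux := hu.pdx.differentiable (by simp)
  have duxx := hu.pdx.pdx.differentiable (by simp)
  have dwxx := hw.pdx.pdx.differentiable (by simp)
  -- unfold only the outer `pdx`: the inner ones must stay atoms for `fun_prop`
  rw [← fderiv_apply_one_zero]
  simp (disch := fun_prop) only [fderiv_fun_add, fderiv_fun_sub, fderiv_fun_mul, div_eq_mul_inv,
    fderiv_fun_pow, fderiv_fun_const, nsmul_eq_mul, add_apply, sub_apply, smul_apply,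
    Pi.zero_apply, zero_apply, smul_eq_mul, fderiv_apply_one_zero]
  ring

/-- On solutions of the KdV6 system `u_t = u_xxx + 6uu_x − w_x`,
`w_xxx + 4u w_x + 2u_x w = 0` (the Kupershmidt deformation of KdV), the first
KdV Hamiltonian density `u²/2` remains a conserved density:
`∂_t(u²/2) = ∂_x(u u_xx − u_x²/2 + 2u³ + u w + w_xx/2)`. -/
theorem kdv6_conserved_density
    (u w : ℝ × ℝ → ℝ)
    (hu : ContDiff ℝ (⊤ : ℕ∞) u) (hw : ContDiff ℝ (⊤ : ℕ∞) w)
    (heq1 : ∀ p : ℝ × ℝ,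
      pdt u p = pdx (pdx (pdx u)) p + 6 * u p * pdx u p - pdx w p)
    (heq2 : ∀ p : ℝ × ℝ,
      pdx (pdx (pdx w)) p + 4 * u p * pdx w p + 2 * pdx u p * w p = 0) :
    ∀ p : ℝ × ℝ,
      pdt (fun q => (u q) ^ 2 / 2) p
        = pdx (fun q => u q * pdx (pdx u) q - (pdx u q) ^ 2 / 2
            + 2 * (u q) ^ 3 + u q * w q + pdx (pdx w) q / 2) p := by
  intro p
  rw [pdt_sq_div_two (hu.differentiable (by simp) p), pdx_kdv6_flux hu hw, heq1, heq2]
  ring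
end
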